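/- Let H be a complex Hilbert space with dim H ≥ 3 and let φ : B_s(H) → B_s(H) be a surjective map such that for all A, B, C ∈ B_s(H), A − B ↔_q C if and only if φ(A) − φ(B) ↔_q φ(C). Then for every A ∈ B_s(H), A^# = A^c if and only if φ(A)^# = φ(A)^c. -/

import Mathlib

/-! `A^# = A^c` holds exactly when `A^#` is closed under subtraction: if `X` anticommutes with
`A` and `X - A ∈ A^#`, then either `X - A` commutes with `A`, so `X` does, or `X - A`
anticommutes with `A`, which forces `A² = 0`, hence `A = 0`. Closure of `A^#` under subtraction is
expressed purely through the relation `(A, B, C) ↦ A - B ↔_q C`, and a surjective map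
preserving that relation transports it, since every operator is a difference `φ U - φ 0`. -/

noncomputable section

variable {H : Type*} [NormedAddCommGroup H] [InnerProductSpace ℂ H] [CompleteSpace H]

/-- `A ↔_q B`: the self-adjoint operators `A` and `B` quasi-commute, i.e.
they either commute or anti-commute. -/
def CommQ (A B : selfAdjoint (H →L[ℂ] H)) : Prop :=
  (A : H →L[ℂ] H) * (B : H →L[ℂ] H) = (B : H →L[ℂ] H) * (A : H →L[ℂ] H) ∨
  (A : H →L[ℂ] H) * (B : H →L[ℂ] H) + (B : H →L[ℂ] H) * (A : H →L[ℂ] H) = 0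

/-- `A ↔_c B`: the self-adjoint operators `A` and `B` commute. -/
def CommC (A B : selfAdjoint (H →L[ℂ] H)) : Prop :=
  (A : H →L[ℂ] H) * (B : H →L[ℂ] H) = (B : H →L[ℂ] H) * (A : H →L[ℂ] H)

theorem Function.Surjective.forall_sub_rel_iff {G : Type*} [AddGroup G] {Q : G → G → Prop}
    {φ : G → G} (hsurj : Function.Surjective φ)
    (hpres : ∀ a b c, Q (a - b) c ↔ Q (φ a - φ b) (φ c)) (c : G) :
    (∀ x y, Q x c → Q y c → Q (x - y) c) ↔
      (∀ x y, Q x (φ c) → Q y (φ c) → Q (x - y) (φ c)) := by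
  have hpres₀ (x : G) : Q x c ↔ Q (φ x - φ 0) (φ c) := by
    simpa only [sub_zero] using hpres x 0 c
  constructor
  · intro h x' y' hx' hy'
    obtain ⟨x, hx⟩ := hsurj (x' + φ 0)
    obtain ⟨y, hy⟩ := hsurj (y' + φ 0)
    have hx'_eq : x' = φ x - φ 0 := by rw [hx, add_sub_cancel_right]
    have hy'_eq : y' = φ y - φ 0 := by rw [hy, add_sub_cancel_right]
    have hxy : Q (x - y) c :=
      h x y ((hpres₀ x).mpr (hx'_eq ▸ hx')) ((hpres₀ y).mpr (hy'_eq ▸ hy'))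
    rw [hx'_eq, hy'_eq, sub_sub_sub_cancel_right]
    exact (hpres x y c).mp hxy
  · intro h x y hx hy
    have hxy := h _ _ ((hpres₀ x).mp hx) ((hpres₀ y).mp hy)
    rw [sub_sub_sub_cancel_right] at hxy
    exact (hpres x y c).mpr hxy

theorem commQ_self (A : selfAdjoint (H →L[ℂ] H)) : CommQ A A := Or.inl rfl

theorem CommC.sub {X Y A : selfAdjoint (H →L[ℂ] H)} (hX : CommC X A) (hY : CommC Y A) :
    CommC (X - Y) A := by
  simp only [CommC, AddSubgroupClass.coe_sub, sub_mul, mul_sub] at *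
  rw [hX, hY]

theorem commC_of_anticomm_of_commQ_sub_self {X A : selfAdjoint (H →L[ℂ] H)}
    (hanti : (X : H →L[ℂ] H) * A + A * X = 0) (hsub : CommQ (X - A) A) : CommC X A := by
  unfold CommQ at hsub
  simp only [AddSubgroupClass.coe_sub, sub_mul, mul_sub] at hsub
  rcases hsub with hcomm | hanti'
  · exact sub_left_injective hcomm
  · have hA_sq : (2 : ℂ) • ((A : H →L[ℂ] H) * A) = 0 := by
      rw [two_smul, ← neg_eq_zero, ← hanti']
      linear_combination (norm := abel) -hanti
    have hA : (A : H →L[ℂ] H) = 0 := by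
      rw [← CStarRing.star_mul_self_eq_zero_iff, A.prop.star_eq]
      exact (smul_eq_zero.mp hA_sq).resolve_left two_ne_zero
    simp only [CommC, hA, mul_zero, zero_mul]

theorem setOf_commQ_eq_setOf_commC_iff (A : selfAdjoint (H →L[ℂ] H)) :
    {X : selfAdjoint (H →L[ℂ] H) | CommQ X A} = {X | CommC X A} ↔
      ∀ X Y, CommQ X A → CommQ Y A → CommQ (X - Y) A := by
  constructor
  · intro h X Y hX hY
    rw [Set.ext_iff] at h
    exact Or.inl (((h X).mp hX).sub ((h Y).mp hY))
  · intro h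
    ext X
    refine ⟨fun hX => ?_, Or.inl⟩
    rcases hX with hcomm | hanti
    · exact hcomm
    · exact commC_of_anticomm_of_commQ_sub_self hanti (h X A (Or.inr hanti) (commQ_self A))

theorem stmt17_general
    (φ : selfAdjoint (H →L[ℂ] H) → selfAdjoint (H →L[ℂ] H))
    (hsurj : Function.Surjective φ)
    (hpres : ∀ A B C : selfAdjoint (H →L[ℂ] H),
      CommQ (A - B) C ↔ CommQ (φ A - φ B) (φ C)) :
    ∀ A : selfAdjoint (H →L[ℂ] H),
      {X : selfAdjoint (H →L[ℂ] H) | CommQ X A} = {X | CommC X A} ↔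
      {X : selfAdjoint (H →L[ℂ] H) | CommQ X (φ A)} = {X | CommC X (φ A)} := by
  intro A
  rw [setOf_commQ_eq_setOf_commC_iff, setOf_commQ_eq_setOf_commC_iff]
  exact hsurj.forall_sub_rel_iff hpres A

theorem stmt17
    (hdim : 3 ≤ Module.rank ℂ H)
    (φ : selfAdjoint (H →L[ℂ] H) → selfAdjoint (H →L[ℂ] H))
    (hsurj : Function.Surjective φ)
    (hpres : ∀ A B C : selfAdjoint (H →L[ℂ] H),
      CommQ (A - B) C ↔ CommQ (φ A - φ B) (φ C)) :
    ∀ A : selfAdjoint (H →L[ℂ] H),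
      {X : selfAdjoint (H →L[ℂ] H) | CommQ X A} = {X | CommC X A} ↔
      {X : selfAdjoint (H →L[ℂ] H) | CommQ X (φ A)} = {X | CommC X (φ A)} :=
  stmt17_general φ hsurj hpres
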